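/- Let X be a real n×k matrix with singular value decomposition X = U D Vᵀ, where U is an n×k real matrix with UᵀU equal to the k×k identity, V is a k×k real orthogonal matrix, and D is the k×k diagonal matrix with diagonal entries λ₁,…,λ_k. Let y ∈ ℝⁿ, γ ∈ ℝ, and for σ₁ > 0, σ₂ > 0, β ∈ ℝᵏ define q(σ₁,σ₂,β) = σ₁^{−(k+1)} σ₂^{−n} exp( −γ (log σ₁)² − σ₂²/2 − ‖Xβ − y‖²/(2σ₂²) − ‖β‖²/(2σ₁²) ). Set w = VᵀXᵀy, a₂ᵢ = λᵢ²/(2σ₂²) + 1/(2σ₁²), a₁ᵢ = wᵢ/σ₂², a₀ = −yᵀy/(2σ₂²), and q̃(σ₁,σ₂) = σ₁^{−(k+1)} σ₂^{−n} exp( −γ (log σ₁)² − σ₂²/2 + a₀ + ∑_{i=1}^{k} a₁ᵢ²/(4 a₂ᵢ) ) · (2π)^{k/2} · ∏_{i=1}^{k} (2 a₂ᵢ)^{−1/2}. Then for every measurable nonnegative function f : (0,∞) × (0,∞) → ℝ, the iterated integral ∫_{0}^{∞} ∫_{0}^{∞} ∫_{ℝᵏ} f(σ₁,σ₂) q(σ₁,σ₂,β)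 dβ dσ₂ dσ₁ equals ∫_{0}^{∞} ∫_{0}^{∞} f(σ₁,σ₂) q̃(σ₁,σ₂) dσ₂ dσ₁. In particular, taking f(σ₁,σ₂) = σ₁ and f(σ₁,σ₂) = σ₂ shows that the unnormalized posterior moments of σ₁ and σ₂ with respect to q equal those with respect to q̃. -/

import Mathlib

/-!
For fixed `σ₁, σ₂` the integrand is `f(σ₁,σ₂)` times the exponential of a quadratic polynomial
in `β`, so the `β`-integral has a closed form and the outer integrands agree pointwise. Substituting
`β = V α` (an isometry, hence measure preserving) turns `‖Xβ - y‖²` into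
`∑ λᵢ² αᵢ² - 2 ∑ wᵢ αᵢ + yᵀy`, because `X V = U D` and `UᵀU = 1`. The exponent then separates
into one-dimensional Gaussians `exp (-a₂ᵢ αᵢ² + a₁ᵢ αᵢ)`, each of which integrates to
`exp (a₁ᵢ² / (4 a₂ᵢ)) √(π / a₂ᵢ)` by completing the square.
-/

open Matrix MeasureTheory Real

theorem integral_exp_neg_mul_sq_add_mul {a : ℝ} (ha : 0 < a) (b : ℝ) :
    ∫ x : ℝ, exp (-a * x ^ 2 + b * x) = exp (b ^ 2 / (4 * a)) * √(π / a) := by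
  calc ∫ x : ℝ, exp (-a * x ^ 2 + b * x)
      = ∫ x : ℝ, exp (b ^ 2 / (4 * a)) * exp (-a * (x - b / (2 * a)) ^ 2) := by
        congr 1 with x
        rw [← exp_add]
        congr 1
        field_simp
        ring
    _ = exp (b ^ 2 / (4 * a)) * √(π / a) := by
        rw [integral_const_mul, integral_sub_right_eq_self (fun x => exp (-a * x ^ 2)),
          integral_gaussian]

section

variable {m ι : Type*} [Fintype m] [Fintype ι]

theorem integral_exp_sum_neg_mul_sq_add_mul {a : ι → ℝ} (ha : ∀ i, 0 < a i) (b : ι → ℝ) :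
    ∫ v : EuclideanSpace ℝ ι, exp (∑ i, (-a i * v i ^ 2 + b i * v i))
      = ∏ i, exp (b i ^ 2 / (4 * a i)) * √(π / a i) := by
  rw [← (PiLp.volume_preserving_toLp ι).integral_comp
    (MeasurableEquiv.toLp 2 _).measurableEmbedding]
  simp only [exp_sum]
  rw [integral_fintype_prod_volume_eq_prod (f := fun i x => exp (-a i * x ^ 2 + b i * x))]
  exact Finset.prod_congr rfl fun i _ => integral_exp_neg_mul_sq_add_mul (ha i) (b i)

theorem prod_sqrt_pi_div {a : ι → ℝ} (ha : ∀ i, 0 < a i) :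
    ∏ i, √(π / a i) = (2 * π) ^ ((Fintype.card ι : ℝ) / 2) * ∏ i, (2 * a i) ^ (-(1 / 2 : ℝ)) := by
  have hfactor : ∀ i, √(π / a i) = √(2 * π) * (2 * a i) ^ (-(1 / 2 : ℝ)) := fun i => by
    rw [rpow_neg (by linarith [ha i]), ← sqrt_eq_rpow, ← sqrt_inv, ← sqrt_mul (by positivity)]
    congr 1
    field_simp [(ha i).ne']
  rw [Finset.prod_congr rfl fun i _ => hfactor i, Finset.prod_mul_distrib, Finset.prod_const,
    Finset.card_univ, sqrt_eq_rpow, ← rpow_natCast, ← rpow_mul (by positivity)]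
  ring_nf

theorem EuclideanSpace.real_sq_norm_eq_dotProduct (x : EuclideanSpace ℝ m) :
    ‖x‖ ^ 2 = x.ofLp ⬝ᵥ x.ofLp := by
  rw [← real_inner_self_eq_norm_sq, EuclideanSpace.inner_eq_star_dotProduct, star_trivial]

variable [DecidableEq ι]

noncomputable def Matrix.orthogonalIsometry (V : Matrix ι ι ℝ) (hV : Vᵀ * V = 1) :
    EuclideanSpace ℝ ι ≃ₗᵢ[ℝ] EuclideanSpace ℝ ι :=
  Unitary.linearIsometryEquiv
    ⟨toEuclideanCLM (𝕜 := ℝ) V, Unitary.map_mem _ <| mem_unitaryGroup_iff'.2 <| by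
      simpa [star_eq_conjTranspose] using hV⟩

theorem Matrix.orthogonalIsometry_apply (V : Matrix ι ι ℝ) (hV : Vᵀ * V = 1)
    (v : EuclideanSpace ℝ ι) : V.orthogonalIsometry hV v = WithLp.toLp 2 (V *ᵥ v) := rfl

variable {X U : Matrix m ι ℝ} {V : Matrix ι ι ℝ} {lam : ι → ℝ}

theorem sq_norm_mulVec_orthogonal_sub (hU : Uᵀ * U = 1) (hV : Vᵀ * V = 1)
    (hX : X = U * diagonal lam * Vᵀ) (y : EuclideanSpace ℝ m) (v : ι → ℝ) :
    ‖(EuclideanSpace.equiv m ℝ).symm (X *ᵥ (V *ᵥ v)) - y‖ ^ 2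
      = ∑ i, (lam i * v i) ^ 2 - 2 * ∑ i, (Vᵀ *ᵥ (Xᵀ *ᵥ y)) i * v i + y ⬝ᵥ y := by
  have hXV : X * V = U * diagonal lam := by
    rw [hX, Matrix.mul_assoc, Matrix.mul_assoc, hV, Matrix.mul_one]
  have hsq : ‖(EuclideanSpace.equiv m ℝ).symm (X *ᵥ (V *ᵥ v))‖ ^ 2
      = ∑ i, (lam i * v i) ^ 2 := by
    rw [EuclideanSpace.real_sq_norm_eq_dotProduct]
    change (X *ᵥ (V *ᵥ v)) ⬝ᵥ (X *ᵥ (V *ᵥ v)) = _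
    rw [mulVec_mulVec, hXV, dotProduct_mulVec, ← mulVec_transpose, mulVec_mulVec,
      transpose_mul, Matrix.mul_assoc, ← Matrix.mul_assoc Uᵀ, hU, Matrix.one_mul,
      diagonal_transpose, ← mulVec_mulVec]
    simp only [dotProduct, mulVec_diagonal]
    exact Finset.sum_congr rfl fun i _ => by ring
  have hcross : inner ℝ ((EuclideanSpace.equiv m ℝ).symm (X *ᵥ (V *ᵥ v))) y
      = ∑ i, (Vᵀ *ᵥ (Xᵀ *ᵥ y)) i * v i := by
    rw [EuclideanSpace.inner_eq_star_dotProduct, star_trivial]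
    change y ⬝ᵥ (X *ᵥ (V *ᵥ v)) = _
    rw [mulVec_mulVec, mulVec_mulVec, ← transpose_mul, dotProduct_mulVec, mulVec_transpose]
    rfl
  rw [norm_sub_sq_real, hsq, hcross, EuclideanSpace.real_sq_norm_eq_dotProduct]

theorem integral_exp_neg_sq_norm_mulVec_sub_div_sub_sq_norm_div (hU : Uᵀ * U = 1)
    (hV : Vᵀ * V = 1) (hX : X = U * diagonal lam * Vᵀ) (y : EuclideanSpace ℝ m)
    {σ₁ σ₂ : ℝ} (h₁ : σ₁ ≠ 0) (h₂ : σ₂ ≠ 0) :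
    ∫ β : EuclideanSpace ℝ ι, exp (-(‖(EuclideanSpace.equiv m ℝ).symm (X *ᵥ β) - y‖ ^ 2
        / (2 * σ₂ ^ 2)) - ‖β‖ ^ 2 / (2 * σ₁ ^ 2))
      = exp (-(y ⬝ᵥ y) / (2 * σ₂ ^ 2) + ∑ i, ((Vᵀ *ᵥ (Xᵀ *ᵥ y)) i / σ₂ ^ 2) ^ 2
            / (4 * (lam i ^ 2 / (2 * σ₂ ^ 2) + 1 / (2 * σ₁ ^ 2))))
        * (2 * π) ^ ((Fintype.card ι : ℝ) / 2)
        * ∏ i, (2 * (lam i ^ 2 / (2 * σ₂ ^ 2) + 1 / (2 * σ₁ ^ 2))) ^ (-(1 / 2 : ℝ)) := by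
  set a : ι → ℝ := fun i => lam i ^ 2 / (2 * σ₂ ^ 2) + 1 / (2 * σ₁ ^ 2)
  have ha : ∀ i, 0 < a i := fun i => by positivity
  set w := Vᵀ *ᵥ (Xᵀ *ᵥ y)
  set e := V.orthogonalIsometry hV
  have hexponent : ∀ v : EuclideanSpace ℝ ι,
      -(‖(EuclideanSpace.equiv m ℝ).symm (X *ᵥ e v) - y‖ ^ 2 / (2 * σ₂ ^ 2))
          - ‖e v‖ ^ 2 / (2 * σ₁ ^ 2)
        = ∑ i, (-a i * v i ^ 2 + w i / σ₂ ^ 2 * v i) + -(y ⬝ᵥ y) / (2 * σ₂ ^ 2) := by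
    intro v
    have hterm : ∀ i, -a i * v i ^ 2 + w i / σ₂ ^ 2 * v i
        = -(lam i * v i) ^ 2 / (2 * σ₂ ^ 2) + w i * v i / σ₂ ^ 2 - v i ^ 2 / (2 * σ₁ ^ 2) := by
      intro i
      simp only [a]
      field_simp
      ring
    rw [LinearIsometryEquiv.norm_map, V.orthogonalIsometry_apply hV,
      sq_norm_mulVec_orthogonal_sub hU hV hX, EuclideanSpace.real_norm_sq_eq,
      Finset.sum_congr rfl fun i _ => hterm i, Finset.sum_sub_distrib, Finset.sum_add_distrib,
      ← Finset.sum_div, ← Finset.sum_div, ← Finset.sum_div, Finset.sum_neg_distrib]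
    ring
  rw [← e.measurePreserving.integral_comp e.toHomeomorph.measurableEmbedding]
  simp_rw [hexponent, exp_add, integral_mul_const, integral_exp_sum_neg_mul_sq_add_mul ha,
    Finset.prod_mul_distrib, ← exp_sum, prod_sqrt_pi_div ha]
  ring

end

theorem stmt10_general
    (n k : ℕ)
    (X U : Matrix (Fin n) (Fin k) ℝ)
    (V : Matrix (Fin k) (Fin k) ℝ)
    (lam : Fin k → ℝ)
    (hU : Uᵀ * U = 1)
    (hV₁ : Vᵀ * V = 1)
    (hX : X = U * Matrix.diagonal lam * Vᵀ)
    (y : EuclideanSpace ℝ (Fin n)) (γ : ℝ)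
    (w : Fin k → ℝ)
    (hw : w = Vᵀ.mulVec (Xᵀ.mulVec y))
    (f : ℝ → ℝ → ℝ) :
    (∫ σ₁ in Set.Ioi (0 : ℝ), ∫ σ₂ in Set.Ioi (0 : ℝ),
        ∫ β : EuclideanSpace ℝ (Fin k),
          f σ₁ σ₂ *
            (σ₁ ^ (-((k : ℤ) + 1)) * σ₂ ^ (-(n : ℤ)) *
              Real.exp (-γ * Real.log σ₁ ^ 2 - σ₂ ^ 2 / 2
                - ‖(EuclideanSpace.equiv (Fin n) ℝ).symm (X.mulVec β) - y‖ ^ 2 / (2 * σ₂ ^ 2)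
                - ‖β‖ ^ 2 / (2 * σ₁ ^ 2))))
      = ∫ σ₁ in Set.Ioi (0 : ℝ), ∫ σ₂ in Set.Ioi (0 : ℝ),
          f σ₁ σ₂ *
            (σ₁ ^ (-((k : ℤ) + 1)) * σ₂ ^ (-(n : ℤ)) *
              Real.exp (-γ * Real.log σ₁ ^ 2 - σ₂ ^ 2 / 2
                + (-(y ⬝ᵥ y) / (2 * σ₂ ^ 2))
                + ∑ i, (w i / σ₂ ^ 2) ^ 2 /
                    (4 * (lam i ^ 2 / (2 * σ₂ ^ 2) + 1 / (2 * σ₁ ^ 2)))) *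
              (2 * Real.pi) ^ ((k : ℝ) / 2) *
              ∏ i, (2 * (lam i ^ 2 / (2 * σ₂ ^ 2) + 1 / (2 * σ₁ ^ 2))) ^ (-(1 / 2 : ℝ))) := by
  subst hw
  refine setIntegral_congr_fun measurableSet_Ioi fun σ₁ (h₁ : 0 < σ₁) => ?_
  refine setIntegral_congr_fun measurableSet_Ioi fun σ₂ (h₂ : 0 < σ₂) => ?_
  have hsplit : ∀ A B C : ℝ, exp (A - B - C) = exp A * exp (-B - C) := fun A B C => by
    rw [← exp_add]
    ring_nf
  simp_rw [hsplit, ← mul_assoc]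
  rw [integral_const_mul,
    integral_exp_neg_sq_norm_mulVec_sub_div_sub_sq_norm_div hU hV₁ hX y h₁.ne' h₂.ne',
    Fintype.card_fin]
  simp only [exp_add]
  ring

/-- Section 3 of the paper, unnormalized moments of `σ₁, σ₂`:
for every measurable nonnegative `f` on `(0,∞) × (0,∞)`,
`∫₀^∞ ∫₀^∞ ∫_{ℝᵏ} f(σ₁,σ₂) q(σ₁,σ₂,β) dβ dσ₂ dσ₁
  = ∫₀^∞ ∫₀^∞ f(σ₁,σ₂) q̃(σ₁,σ₂) dσ₂ dσ₁`. -/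
theorem stmt10
    (n k : ℕ) (hn : 0 < n) (hk : 0 < k)
    (X U : Matrix (Fin n) (Fin k) ℝ)
    (V : Matrix (Fin k) (Fin k) ℝ)
    (lam : Fin k → ℝ)
    (hU : Uᵀ * U = 1)
    (hV₁ : Vᵀ * V = 1) (hV₂ : V * Vᵀ = 1)
    (hX : X = U * Matrix.diagonal lam * Vᵀ)
    (y : EuclideanSpace ℝ (Fin n)) (γ : ℝ)
    (w : Fin k → ℝ)
    (hw : w = Vᵀ.mulVec (Xᵀ.mulVec y))
    (f : ℝ → ℝ → ℝ)
    (hf : Measurable (Function.uncurry f))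
    (hf0 : ∀ σ₁ σ₂ : ℝ, 0 < σ₁ → 0 < σ₂ → 0 ≤ f σ₁ σ₂) :
    (∫ σ₁ in Set.Ioi (0 : ℝ), ∫ σ₂ in Set.Ioi (0 : ℝ),
        ∫ β : EuclideanSpace ℝ (Fin k),
          f σ₁ σ₂ *
            (σ₁ ^ (-((k : ℤ) + 1)) * σ₂ ^ (-(n : ℤ)) *
              Real.exp (-γ * Real.log σ₁ ^ 2 - σ₂ ^ 2 / 2
                - ‖(EuclideanSpace.equiv (Fin n) ℝ).symm (X.mulVec β) - y‖ ^ 2 / (2 * σ₂ ^ 2)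
                - ‖β‖ ^ 2 / (2 * σ₁ ^ 2))))
      = ∫ σ₁ in Set.Ioi (0 : ℝ), ∫ σ₂ in Set.Ioi (0 : ℝ),
          f σ₁ σ₂ *
            (σ₁ ^ (-((k : ℤ) + 1)) * σ₂ ^ (-(n : ℤ)) *
              Real.exp (-γ * Real.log σ₁ ^ 2 - σ₂ ^ 2 / 2
                + (-(y ⬝ᵥ y) / (2 * σ₂ ^ 2))
                + ∑ i, (w i / σ₂ ^ 2) ^ 2 /
                    (4 * (lam i ^ 2 / (2 * σ₂ ^ 2) + 1 / (2 * σ₁ ^ 2)))) *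
              (2 * Real.pi) ^ ((k : ℝ) / 2) *
              ∏ i, (2 * (lam i ^ 2 / (2 * σ₂ ^ 2) + 1 / (2 * σ₁ ^ 2))) ^ (-(1 / 2 : ℝ))) :=
  stmt10_general n k X U V lam hU hV₁ hX y γ w hw f
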